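/- Under the same hypotheses, if additionally c ≤ 1/4, then the conserved constant C of a minimal cR-geodesic from x to y with parameter interval [0, d(x,y)] satisfies C ≥ 1/2. -/
import Mathlib


/-- footnote 3.  Under the hypotheses of Statement 7, if in
addition c ≤ 1/4, then the conserved constant C = |γ'|² − 2cR∘γ of a minimal
cR-geodesic γ : [0, d(x,y)] → M from x to y satisfies C ≥ 1/2.  The
hypotheses record R > 0 and R ≤ 1 (from R + |∇f|² = 1), the conservation law,
the length bound d(x,y) ≤ ∫ |γ'| ds, and minimality of γ via comparison with
the unit-speed minimal Riemannian geodesic. -/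
theorem conserved_constant_ge_half
    {M : Type*} [MetricSpace M] (c C : ℝ) (hc : 0 < c) (hc4 : c ≤ 1/4)
    (x y : M) (hxy : x ≠ y) (γ : ℝ → M) (R : M → ℝ) (speed : ℝ → ℝ)
    (hRpos : ∀ z, 0 < R z) (hRle : ∀ z, R z ≤ 1)
    (hγ0 : γ 0 = x) (hγ1 : γ (dist x y) = y)
    (hspeed : ∀ s, 0 ≤ speed s)
    (hcons : ∀ s ∈ Set.Icc (0:ℝ) (dist x y),
      (speed s)^2 - 2 * c * R (γ s) = C)
    (hlen : dist x y ≤ ∫ s in (0:ℝ)..(dist x y), speed s)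
    (hmin : (∫ s in (0:ℝ)..(dist x y), ((speed s)^2 + 2 * c * R (γ s)))
      ≤ (1 + 2 * c) * dist x y) :
    1/2 ≤ C := by
  have hd : 0 < dist x y := dist_pos.mpr hxy
  by_cases hint : IntervalIntegrable speed MeasureTheory.volume 0 (dist x y)
  · have h0 : 0 ≤ C + 2*c := by
      have h := hcons 0 ⟨le_refl _, hd.le⟩
      nlinarith [hspeed 0, sq_nonneg (speed 0), hRle (γ 0), hRpos (γ 0)]
    have hbound : ∀ s ∈ Set.Icc (0:ℝ) (dist x y), speed s ≤ Real.sqrt (C + 2*c) := by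
      intro s hs
      have h := hcons s hs
      have h1 : (speed s)^2 ≤ C + 2*c := by nlinarith [hRle (γ s)]
      calc speed s = Real.sqrt ((speed s)^2) := (Real.sqrt_sq (hspeed s)).symm
        _ ≤ Real.sqrt (C + 2*c) := Real.sqrt_le_sqrt h1
    have hmono := intervalIntegral.integral_mono_on hd.le hint
      (intervalIntegrable_const (c := Real.sqrt (C + 2*c))) hbound
    rw [intervalIntegral.integral_const, smul_eq_mul] at hmono
    have h2 : dist x y ≤ (dist x y - 0) * Real.sqrt (C+2*c) := le_trans hlen hmono
    have h3 : 1 ≤ Real.sqrt (C + 2*c) := by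
      rw [sub_zero] at h2
      exact le_of_mul_le_mul_left (by linarith) hd
    have h4 : 1 ≤ C + 2*c := by
      nlinarith [Real.sq_sqrt h0, h3]
    linarith
  · rw [intervalIntegral.integral_undef hint] at hlen
    linarith
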